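/- Let F : H → H be monotone and L-Lipschitz, g : H → ℝ ∪ {+∞} proper, convex, lower semicontinuous, γ > 0, and let the extragradient iterates be z̄ᵏ = prox_{γg}(zᵏ - γF(zᵏ)), zᵏ⁺¹ = prox_{γg}(zᵏ - γF(z̄ᵏ)). Define Vₖ = (2/γ)⟨zᵏ - zᵏ⁺¹, F(zᵏ) - F(z̄ᵏ)⟩ + (1/γ²)‖zᵏ⁺¹ - z̄ᵏ‖² + (1/γ²)‖zᵏ - zᵏ⁺¹‖². Then Vₖ₊₁ ≤ Vₖ - (1 - γ²L²)(1/γ²)‖zᵏ⁺¹ - z̄ᵏ‖² for all k ∈ ℕ. -/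

import Mathlib

/-! The prox step `p = prox_{γg}(x)` is characterized by the subgradient inclusion
`γ⁻¹ (x - p) ∈ ∂g(p)`. Applied to the three prox steps producing `zᵏ⁺¹`, `z̄ᵏ⁺¹`, `zᵏ⁺²`, the
subgradient inequalities sum (cyclically) to a nonpositive quantity. Expanding
`γ² (Vₖ - Vₖ₊₁)` exactly, it equals `‖zᵏ⁺¹ - z̄ᵏ‖² - γ²‖F zᵏ⁺¹ - F z̄ᵏ‖²`, plus the monotonicity
term `2γ ⟪F zᵏ - F zᵏ⁺¹, zᵏ - zᵏ⁺¹⟫`, minus twice that cyclic sum, plus a square; Lipschitz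
continuity bounds the second term by `γ²L²‖zᵏ⁺¹ - z̄ᵏ‖²`. -/

open scoped RealInnerProductSpace

/-- `g` is proper: finite somewhere and never `⊥`. -/
def IsProperEF {H : Type*} (g : H → EReal) : Prop :=
  (∃ x, g x ≠ ⊤) ∧ ∀ x, g x ≠ ⊥

/-- `g` is convex (extended-real-valued). -/
def IsConvexEF {H : Type*} [NormedAddCommGroup H] [InnerProductSpace ℝ H]
    (g : H → EReal) : Prop :=
  ∀ x y : H, ∀ a b : ℝ, 0 ≤ a → 0 ≤ b → a + b = 1 →
    g (a • x + b • y) ≤ (a : EReal) * g x + (b : EReal) * g y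

/-- `ξ` is a subgradient of `g` at `z`, i.e. `ξ ∈ ∂g(z)`. -/
def InSubdiff {H : Type*} [NormedAddCommGroup H] [InnerProductSpace ℝ H]
    (g : H → EReal) (z ξ : H) : Prop :=
  ∀ y : H, g z + ((⟪ξ, y - z⟫ : ℝ) : EReal) ≤ g y

/-- `p = prox_{γ g}(x)`, i.e. `p` minimizes `g(·) + (1/(2γ))‖x - ·‖²`. -/
def IsProx {H : Type*} [NormedAddCommGroup H] [InnerProductSpace ℝ H]
    (g : H → EReal) (γ : ℝ) (x p : H) : Prop :=
  ∀ y : H, g p + ((1 / (2 * γ) * ‖x - p‖ ^ 2 : ℝ) : EReal) ≤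
    g y + ((1 / (2 * γ) * ‖x - y‖ ^ 2 : ℝ) : EReal)

/-- The Lyapunov function `V`. -/
noncomputable def lyapV {H : Type*} [NormedAddCommGroup H] [InnerProductSpace ℝ H]
    (F : H → H) (γ : ℝ) (z zb zp : H) : ℝ :=
  (2 / γ) * ⟪z - zp, F z - F zb⟫ + (1 / γ ^ 2) * ‖zp - zb‖ ^ 2 + (1 / γ ^ 2) * ‖z - zp‖ ^ 2

open Filter Topology

theorem le_of_forall_le_add_mul {a b c : ℝ} (h : ∀ θ : ℝ, 0 < θ → θ ≤ 1 → a ≤ b + θ * c) :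
    a ≤ b := by
  have hlim : Tendsto (fun θ : ℝ => b + θ * c) (𝓝[>] 0) (𝓝 b) :=
    (Continuous.tendsto' (by fun_prop) 0 b (by simp)).mono_left nhdsWithin_le_nhds
  refine ge_of_tendsto hlim ?_
  filter_upwards [Ioc_mem_nhdsGT one_pos] with θ hθ using h θ hθ.1 hθ.2

theorem IsProperEF.exists_eq_coe {H : Type*} {g : H → EReal} (hg : IsProperEF g) {y : H}
    (hy : g y ≠ ⊤) : ∃ r : ℝ, g y = r :=
  ⟨(g y).toReal, (EReal.coe_toReal hy (hg.2 y)).symm⟩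

section Prox

variable {H : Type*} [NormedAddCommGroup H] [InnerProductSpace ℝ H] {g : H → EReal} {γ : ℝ}
  {x p : H}

theorem InSubdiff.inner_le_sub {y ξ : H} {r s : ℝ} (h : InSubdiff g x ξ) (hx : g x = r)
    (hy : g y = s) : ⟪ξ, y - x⟫ ≤ s - r := by
  have h' := h y
  rw [hx, hy, ← EReal.coe_add, EReal.coe_le_coe_iff] at h'
  linarith

theorem IsProx.ne_top (hg : IsProperEF g) (hp : IsProx g γ x p) : g p ≠ ⊤ := by
  obtain ⟨y, hy⟩ := hg.1
  intro htop
  have h := hp y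
  rw [htop, EReal.top_add_of_ne_bot (EReal.coe_ne_bot _), top_le_iff] at h
  exact (EReal.add_lt_top hy (EReal.coe_ne_top _)).ne h

theorem IsProx.inSubdiff (hg : IsProperEF g) (hconv : IsConvexEF g) (hγ : 0 < γ)
    (hp : IsProx g γ x p) : InSubdiff g p (γ⁻¹ • (x - p)) := by
  intro y
  rcases eq_or_ne (g y) ⊤ with hy | hy
  · simp [hy]
  obtain ⟨gp, hgp⟩ := hg.exists_eq_coe (hp.ne_top hg)
  obtain ⟨gy, hgy⟩ := hg.exists_eq_coe hy
  rw [hgp, hgy, real_inner_smul_left, ← EReal.coe_add, EReal.coe_le_coe_iff]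
  -- test the minimality of `p` against the points `p + θ • (y - p)`, then let `θ → 0⁺`
  refine le_of_forall_le_add_mul (c := 1 / (2 * γ) * ‖y - p‖ ^ 2) fun θ hθ0 hθ1 => ?_
  have hseg : g (p + θ • (y - p)) ≤ ((1 - θ) * gp + θ * gy : ℝ) := by
    have h := hconv p y (1 - θ) θ (by linarith) hθ0.le (by ring)
    rw [hgp, hgy] at h
    convert h using 1
    · congr 1; module
    · simp only [EReal.coe_add, EReal.coe_mul]
  have hprox := (hp (p + θ • (y - p))).trans (add_le_add_left hseg _)
  rw [hgp, ← EReal.coe_add, ← EReal.coe_add, EReal.coe_le_coe_iff,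
    show x - (p + θ • (y - p)) = (x - p) - θ • (y - p) by abel, norm_sub_sq_real (x - p),
    norm_smul, real_inner_smul_right, Real.norm_of_nonneg hθ0.le] at hprox
  have hγinv : γ⁻¹ = 2 * (1 / (2 * γ)) := by field_simp
  refine le_of_mul_le_mul_left ?_ hθ0
  rw [hγinv]
  linear_combination hprox

theorem IsProx.inner_cycle_nonpos (hg : IsProperEF g) (hconv : IsConvexEF g) (hγ : 0 < γ)
    {x₁ x₂ x₃ p₁ p₂ p₃ : H} (h₁ : IsProx g γ x₁ p₁) (h₂ : IsProx g γ x₂ p₂)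
    (h₃ : IsProx g γ x₃ p₃) :
    ⟪x₁ - p₁, p₂ - p₁⟫ + ⟪x₂ - p₂, p₃ - p₂⟫ + ⟪x₃ - p₃, p₁ - p₃⟫ ≤ 0 := by
  obtain ⟨r₁, e₁⟩ := hg.exists_eq_coe (h₁.ne_top hg)
  obtain ⟨r₂, e₂⟩ := hg.exists_eq_coe (h₂.ne_top hg)
  obtain ⟨r₃, e₃⟩ := hg.exists_eq_coe (h₃.ne_top hg)
  have a₁ := (h₁.inSubdiff hg hconv hγ).inner_le_sub e₁ e₂
  have a₂ := (h₂.inSubdiff hg hconv hγ).inner_le_sub e₂ e₃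
  have a₃ := (h₃.inSubdiff hg hconv hγ).inner_le_sub e₃ e₁
  rw [real_inner_smul_left] at a₁ a₂ a₃
  refine nonpos_of_mul_nonpos_right ?_ (inv_pos.2 hγ)
  linarith

theorem sq_mul_lyapV (F : H → H) (hγ : γ ≠ 0) (z zb zp : H) :
    γ ^ 2 * lyapV F γ z zb zp =
      2 * γ * ⟪z - zp, F z - F zb⟫ + ‖zp - zb‖ ^ 2 + ‖z - zp‖ ^ 2 := by
  unfold lyapV
  field_simp

theorem sq_mul_lyapV_sub_lyapV (F : H → H) (hγ : γ ≠ 0) (z₀ zb₀ z₁ zb₁ z₂ : H) :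
    γ ^ 2 * (lyapV F γ z₀ zb₀ z₁ - lyapV F γ z₁ zb₁ z₂) =
      ‖z₁ - zb₀‖ ^ 2 - γ ^ 2 * ‖F z₁ - F zb₀‖ ^ 2 + 2 * γ * ⟪F z₀ - F z₁, z₀ - z₁⟫
        - 2 * (⟪z₀ - γ • F zb₀ - z₁, zb₁ - z₁⟫ + ⟪z₁ - γ • F z₁ - zb₁, z₂ - zb₁⟫
          + ⟪z₁ - γ • F zb₁ - z₂, z₁ - z₂⟫)
        + ‖(z₀ - γ • F zb₀ - z₁) - (z₁ - γ • F z₁ - zb₁)‖ ^ 2 := by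
  rw [mul_sub, sq_mul_lyapV F hγ, sq_mul_lyapV F hγ]
  simp only [← real_inner_self_eq_norm_sq, inner_sub_left, inner_sub_right,
    real_inner_smul_right, real_inner_comm]
  ring

end Prox

theorem stmt4_general {H : Type*} [NormedAddCommGroup H] [InnerProductSpace ℝ H]
    (F : H → H) (L γ : ℝ)
    (hmono : ∀ x y : H, 0 ≤ ⟪F x - F y, x - y⟫)
    (hlip : ∀ x y : H, ‖F x - F y‖ ≤ L * ‖x - y‖)
    (g : H → EReal) (hproper : IsProperEF g) (hconv : IsConvexEF g)
    (hγ : 0 < γ) (z zb : ℕ → H)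
    (hzb : ∀ k, IsProx g γ (z k - γ • F (z k)) (zb k))
    (hz : ∀ k, IsProx g γ (z k - γ • F (zb k)) (z (k + 1))) :
    ∀ k : ℕ,
      lyapV F γ (z (k + 1)) (zb (k + 1)) (z (k + 2)) ≤
        lyapV F γ (z k) (zb k) (z (k + 1)) -
          (1 - γ ^ 2 * L ^ 2) * (1 / γ ^ 2) * ‖z (k + 1) - zb k‖ ^ 2 := by
  intro k
  have hcycle := IsProx.inner_cycle_nonpos hproper hconv hγ (hz k) (hzb (k + 1)) (hz (k + 1))
  have hmono' := mul_nonneg (by positivity : (0 : ℝ) ≤ 2 * γ) (hmono (z k) (z (k + 1)))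
  have hlip' : ‖F (z (k + 1)) - F (zb k)‖ ^ 2 ≤ L ^ 2 * ‖z (k + 1) - zb k‖ ^ 2 := by
    rw [← mul_pow]
    exact pow_le_pow_left₀ (norm_nonneg _) (hlip _ _) 2
  have hdescent : (1 - γ ^ 2 * L ^ 2) * ‖z (k + 1) - zb k‖ ^ 2 ≤
      γ ^ 2 * (lyapV F γ (z k) (zb k) (z (k + 1)) -
        lyapV F γ (z (k + 1)) (zb (k + 1)) (z (k + 2))) := by
    rw [sq_mul_lyapV_sub_lyapV F hγ.ne']
    linarith [mul_le_mul_of_nonneg_left hlip' (sq_nonneg γ),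
      sq_nonneg ‖(z k - γ • F (zb k) - z (k + 1)) - (z (k + 1) - γ • F (z (k + 1)) - zb (k + 1))‖]
  rw [mul_one_div, div_mul_eq_mul_div]
  linarith [(div_le_iff₀' (by positivity)).2 hdescent]

theorem stmt4 {H : Type*} [NormedAddCommGroup H] [InnerProductSpace ℝ H] [CompleteSpace H]
    (F : H → H) (L γ : ℝ) (hL : 0 < L)
    (hmono : ∀ x y : H, 0 ≤ ⟪F x - F y, x - y⟫)
    (hlip : ∀ x y : H, ‖F x - F y‖ ≤ L * ‖x - y‖)
    (g : H → EReal) (hproper : IsProperEF g) (hconv : IsConvexEF g)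
    (hlsc : LowerSemicontinuous g)
    (hγ : 0 < γ) (z zb : ℕ → H)
    (hzb : ∀ k, IsProx g γ (z k - γ • F (z k)) (zb k))
    (hz : ∀ k, IsProx g γ (z k - γ • F (zb k)) (z (k + 1))) :
    ∀ k : ℕ,
      lyapV F γ (z (k + 1)) (zb (k + 1)) (z (k + 2)) ≤
        lyapV F γ (z k) (zb k) (z (k + 1)) -
          (1 - γ ^ 2 * L ^ 2) * (1 / γ ^ 2) * ‖z (k + 1) - zb k‖ ^ 2 :=
  stmt4_general F L γ hmono hlip g hproper hconv hγ z zb hzb hz
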